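/- Let S and T be distinct nonempty subsets of [n−1] with S ⊆ T. Then α(Γ(n,T)) ≥ α(Γ(n,S)) · |VΓ(n,T)| / |VΓ(n,S)| (the quotient |VΓ(n,T)|/|VΓ(n,S)| being the common number of preimages of each vertex of Γ(n,S) under proj^n_{T,S}). -/

import Mathlib

open Finset

/-- `Iv n` is the set `[n] = {1, …, n}` as a finset of naturals (with `Iv 0 = ∅`). -/
def Iv (n : ℕ) : Finset ℕ := Finset.Icc 1 n

/-- `f` is a flag of the ground set `[n]`: a set of nonempty proper subsets of `[n]`
that is totally ordered by inclusion. -/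
def IsFlag (n : ℕ) (f : Finset (Finset ℕ)) : Prop :=
  (∀ A ∈ f, A.Nonempty ∧ A ⊆ Iv n ∧ A ≠ Iv n) ∧
  ∀ A ∈ f, ∀ B ∈ f, A ⊆ B ∨ B ⊆ A

/-- The type of a flag: the set of cardinalities of its members. -/
def flagType (f : Finset (Finset ℕ)) : Finset ℕ := f.image Finset.card

/-- The vertices of `Γ(n, T)`: flags of `[n]` of type `T`. -/
def FlagV (n : ℕ) (T : Finset ℕ) : Type :=
  {f : Finset (Finset ℕ) // IsFlag n f ∧ flagType f = T}

/-- Two flags of `[n]` are in general position. -/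
def GenPos (n : ℕ) (f g : Finset (Finset ℕ)) : Prop :=
  ∀ A ∈ f, ∀ B ∈ g, A ∩ B = ∅ ∨ A ∪ B = Iv n

/-- The graph `Γ(n, T)` on the flags of `[n]` of type `T`, two distinct flags being
adjacent iff they are in general position. -/
def flagGraph (n : ℕ) (T : Finset ℕ) : SimpleGraph (FlagV n T) where
  Adj f g := f ≠ g ∧ GenPos n f.1 g.1
  symm := by
    constructor
    rintro f g ⟨hne, h⟩
    refine ⟨hne.symm, fun A hA B hB => ?_⟩
    rcases h B hB A hA with h' | h'
    · exact Or.inl (by rwa [Finset.inter_comm])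
    · exact Or.inr (by rwa [Finset.union_comm])
  loopless := ⟨fun f h => h.1 rfl⟩

/-- A set of vertices is independent: pairwise nonadjacent. -/
def IsIndep {V : Type*} (G : SimpleGraph V) (s : Set V) : Prop :=
  ∀ ⦃u⦄, u ∈ s → ∀ ⦃v⦄, v ∈ s → ¬ G.Adj u v

/-- A maximal independent set: independent, and no vertex can be added to it
keeping it independent. -/
def IsMaxIndep {V : Type*} (G : SimpleGraph V) (s : Set V) : Prop :=
  IsIndep G s ∧ ∀ v ∉ s, ¬ IsIndep G (insert v s)

/-- The independence number of a graph: the largest cardinality of an independent set. -/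
noncomputable def indepNum {V : Type*} (G : SimpleGraph V) : ℕ :=
  sSup {k | ∃ s : Set V, IsIndep G s ∧ s.ncard = k}

/-- Two sets of vertices are equivalent when some automorphism of the graph maps
one onto the other. -/
def EquivIndep {V : Type*} (G : SimpleGraph V) (s t : Set V) : Prop :=
  ∃ φ : G ≃g G, ⇑φ '' s = t

/-- The projection of a flag to the sub-type `S`: keep only the members whose
cardinality lies in `S`. -/
def projFlag (S : Finset ℕ) (f : Finset (Finset ℕ)) : Finset (Finset ℕ) :=
  f.filter (fun A => A.card ∈ S)

/-- Condition (I) of Example 3.1: `[i] ⊆ B ⊆ [n-1]`. -/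
def condI (n i : ℕ) (B : Finset ℕ) : Prop := Iv i ⊆ B ∧ B ⊆ Iv (n - 1)

/-- Condition (II) of Example 3.1: `min A ≤ i` and `[min A] ⊆ B`. -/
def condII (i : ℕ) (A B : Finset ℕ) : Prop :=
  ∃ j ∈ A, (∀ k ∈ A, j ≤ k) ∧ j ≤ i ∧ Iv j ⊆ B

/-- The set `F_i(n,a,b)` of flags `(A,B)` of `[n]` of type `{a,b}` satisfying
condition (I) or condition (II). -/
def Fi (n a b i : ℕ) : Set (FlagV n {a, b}) :=
  {f | ∃ A B : Finset ℕ, A ∈ f.1 ∧ B ∈ f.1 ∧ A.card = a ∧ B.card = b ∧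
        (condI n i B ∨ condII i A B)}

/-- The set `bar F_i(n,a,b)` for `i = 2b-n+1`: flags `(A,B)` of type `{a,b}` with
`[i] ⊆ B` or condition (II). -/
def FiBar (n a b : ℕ) : Set (FlagV n {a, b}) :=
  {f | ∃ A B : Finset ℕ, A ∈ f.1 ∧ B ∈ f.1 ∧ A.card = a ∧ B.card = b ∧
        (Iv (2 * b - n + 1) ⊆ B ∨ condII (2 * b - n + 1) A B)}

/-- The rational number `i₀ = b - 1 - (n-b)(n-b-1)/a`. -/
def izero (n a b : ℕ) : ℚ :=
  (b : ℚ) - 1 - ((n : ℚ) - b) * ((n : ℚ) - b - 1) / a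

/-- The index `i = max{0, ⌈i₀⌉}`. -/
def iDef (n a b : ℕ) : ℕ := (max 0 ⌈izero n a b⌉).toNat

/-- `f(n,a,b)`: the largest cardinality of the sets `F_j(n,a,b)`, `0 ≤ j ≤ 2b-n+1`. -/
noncomputable def fMax (n a b : ℕ) : ℕ :=
  (Finset.range (2 * b - n + 2)).sup (fun j => (Fi n a b j).ncard)

/-- An independent set of `Γ(n,{a,b})` is of standard type if it has cardinality
`f(n,a,b)` and some automorphism of the graph maps it onto one of the sets of
Example 3.1. -/
noncomputable def IsStandardType (n a b : ℕ) (F : Set (FlagV n {a, b})) : Prop :=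
  F.ncard = fMax n a b ∧
  ∃ φ : flagGraph n {a, b} ≃g flagGraph n {a, b},
    (∃ j ≤ 2 * b - n + 1, ⇑φ '' F = Fi n a b j) ∨ ⇑φ '' F = FiBar n a b

section Aux
open scoped Classical

lemma Iv_card (n : ℕ) : (Iv n).card = n := by simp [Iv]

lemma flag_mem_powerset {n : ℕ} {f : Finset (Finset ℕ)} (hf : IsFlag n f) :
    f ∈ (Iv n).powerset.powerset := by
  simp only [Finset.mem_powerset]
  intro A hA
  simp only [Finset.mem_powerset]
  exact (hf.1 A hA).2.1

instance flagV_finite (n : ℕ) (T : Finset ℕ) : Finite (FlagV n T) := by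
  apply Finite.of_injective (fun f : FlagV n T =>
    (⟨f.1, flag_mem_powerset f.2.1⟩ : {x // x ∈ (Iv n).powerset.powerset}))
  intro a b h
  exact Subtype.ext (by simpa [Subtype.ext_iff] using h)

noncomputable instance (n : ℕ) (T : Finset ℕ) : Fintype (FlagV n T) := Fintype.ofFinite _

lemma chain_card_injOn {f : Finset (Finset ℕ)}
    (hC : ∀ A ∈ f, ∀ B ∈ f, A ⊆ B ∨ B ⊆ A) : Set.InjOn Finset.card (↑f : Set (Finset ℕ)) := by
  intro A hA B hB h
  rcases hC A hA B hB with h' | h'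
  · exact Finset.eq_of_subset_of_card_le h' h.ge
  · exact (Finset.eq_of_subset_of_card_le h' h.le).symm

lemma exists_injOn_image_eq {U V : Finset ℕ} (h : U.card = V.card) :
    ∃ σ : ℕ → ℕ, Set.InjOn σ ↑U ∧ U.image σ = V := by
  let e := Finset.equivOfCardEq h
  refine ⟨fun x => if hx : x ∈ U then (e ⟨x, hx⟩ : ℕ) else 0, ?_, ?_⟩
  · intro x hx y hy hxy
    simp only [Finset.mem_coe] at hx hy
    simp only [dif_pos hx, dif_pos hy] at hxy
    exact congrArg Subtype.val (e.injective (Subtype.ext hxy))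
  · ext y
    simp only [Finset.mem_image]
    constructor
    · rintro ⟨x, hx, rfl⟩
      rw [dif_pos hx]; exact (e ⟨x, hx⟩).2
    · intro hy
      refine ⟨e.symm ⟨y, hy⟩, (e.symm ⟨y, hy⟩).2, ?_⟩
      rw [dif_pos (e.symm ⟨y, hy⟩).2]
      simp

lemma image_card_erase {f : Finset (Finset ℕ)} (hC : ∀ A ∈ f, ∀ B ∈ f, A ⊆ B ∨ B ⊆ A)
    {A : Finset ℕ} (hA : A ∈ f) :
    (f.erase A).image Finset.card = (f.image Finset.card).erase A.card := by
  ext x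
  simp only [Finset.mem_image, Finset.mem_erase]
  constructor
  · rintro ⟨C, ⟨hCA, hC'⟩, rfl⟩
    exact ⟨fun h => hCA (chain_card_injOn hC hC' hA h), C, hC', rfl⟩
  · rintro ⟨hx, C, hC', rfl⟩
    exact ⟨C, ⟨fun h => hx (by rw [h]), hC'⟩, rfl⟩

end Aux

section Aux2
open scoped Classical

lemma exists_sigma : ∀ (m : ℕ) (f g : Finset (Finset ℕ)) (U V : Finset ℕ),
    f.card ≤ m → U.card = V.card →
    (∀ A ∈ f, A.Nonempty ∧ A ⊆ U) → (∀ A ∈ f, ∀ B ∈ f, A ⊆ B ∨ B ⊆ A) →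
    (∀ A ∈ g, A.Nonempty ∧ A ⊆ V) → (∀ A ∈ g, ∀ B ∈ g, A ⊆ B ∨ B ⊆ A) →
    f.image Finset.card = g.image Finset.card →
    ∃ σ : ℕ → ℕ, Set.InjOn σ ↑U ∧ U.image σ = V ∧ f.image (Finset.image σ) = g := by
  intro m
  induction m with
  | zero =>
    intro f g U V hm hUV hfU hfC hgV hgC hcard
    have hf : f = ∅ := Finset.card_eq_zero.mp (Nat.le_zero.mp hm)
    subst hf
    have hg : g = ∅ := by
      rcases Finset.eq_empty_or_nonempty g with rfl | ⟨B, hB⟩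
      · rfl
      · exfalso
        have : B.card ∈ Finset.image Finset.card (∅ : Finset (Finset ℕ)) :=
          hcard ▸ Finset.mem_image_of_mem _ hB
        simp at this
    subst hg
    obtain ⟨σ, h1, h2⟩ := exists_injOn_image_eq hUV
    exact ⟨σ, h1, h2, by simp⟩
  | succ m ih =>
    intro f g U V hm hUV hfU hfC hgV hgC hcard
    rcases Finset.eq_empty_or_nonempty f with rfl | hfne
    · have hg : g = ∅ := by
        rcases Finset.eq_empty_or_nonempty g with rfl | ⟨B, hB⟩
        · rfl
        · exfalso
          have : B.card ∈ Finset.image Finset.card (∅ : Finset (Finset ℕ)) :=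
            hcard ▸ Finset.mem_image_of_mem _ hB
          simp at this
      subst hg
      obtain ⟨σ, h1, h2⟩ := exists_injOn_image_eq hUV
      exact ⟨σ, h1, h2, by simp⟩
    obtain ⟨A, hA, hAmin⟩ := Finset.exists_min_image f Finset.card hfne
    have hBex : A.card ∈ g.image Finset.card := by
      rw [← hcard]; exact Finset.mem_image_of_mem _ hA
    obtain ⟨B, hB, hBA⟩ := Finset.mem_image.mp hBex
    have hBmin : ∀ C ∈ g, B.card ≤ C.card := by
      intro C hC
      have : C.card ∈ f.image Finset.card := by
        rw [hcard]; exact Finset.mem_image_of_mem _ hC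
      obtain ⟨C', hC', hCC⟩ := Finset.mem_image.mp this
      rw [hBA, ← hCC]; exact hAmin C' hC'
    have hAsub : ∀ C ∈ f, A ⊆ C := by
      intro C hC
      rcases hfC A hA C hC with h | h
      · exact h
      · have := Finset.eq_of_subset_of_card_le h (hAmin C hC)
        rw [this]
    have hBsub : ∀ C ∈ g, B ⊆ C := by
      intro C hC
      rcases hgC B hB C hC with h | h
      · exact h
      · have := Finset.eq_of_subset_of_card_le h (hBmin C hC)
        rw [this]
    have hAU : A ⊆ U := (hfU A hA).2
    have hBV : B ⊆ V := (hgV B hB).2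
    -- the reduced flags
    set f' := (f.erase A).image (fun C => C \ A) with hf'
    set g' := (g.erase B).image (fun C => C \ B) with hg'
    have keycard : ∀ (f : Finset (Finset ℕ)) (A : Finset ℕ), A ∈ f →
        (∀ C ∈ f, ∀ D ∈ f, C ⊆ D ∨ D ⊆ C) → (∀ C ∈ f, A ⊆ C) →
        ((f.erase A).image (fun C => C \ A)).image Finset.card
          = ((f.image Finset.card).erase A.card).image (fun x => x - A.card) := by
      intro f A hA hC hsub
      rw [Finset.image_image, ← image_card_erase hC hA, Finset.image_image]
      apply Finset.image_congr
      intro C hC'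
      simp only [Function.comp_apply]
      exact Finset.card_sdiff_of_subset (hsub C (Finset.mem_of_mem_erase hC'))
    have hcard' : f'.image Finset.card = g'.image Finset.card := by
      rw [hf', hg', keycard f A hA hfC hAsub, keycard g B hB hgC hBsub, hcard, hBA]
    have hf'card : f'.card ≤ m := by
      have h1 : f'.card ≤ (f.erase A).card := Finset.card_image_le
      have h2 : (f.erase A).card = f.card - 1 := Finset.card_erase_of_mem hA
      have h3 : 1 ≤ f.card := Finset.card_pos.mpr ⟨A, hA⟩
      omega
    have hUV' : (U \ A).card = (V \ B).card := by
      rw [Finset.card_sdiff_of_subset hAU, Finset.card_sdiff_of_subset hBV, hUV, hBA]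
    have hfU' : ∀ A' ∈ f', A'.Nonempty ∧ A' ⊆ U \ A := by
      intro A' hA'
      obtain ⟨C, hC, rfl⟩ := Finset.mem_image.mp hA'
      have hCf := Finset.mem_of_mem_erase hC
      have hCA := Finset.ne_of_mem_erase hC
      constructor
      · rw [Finset.sdiff_nonempty]
        intro hsub
        exact hCA (Finset.eq_of_subset_of_card_le hsub (hAmin C hCf))
      · exact Finset.sdiff_subset_sdiff (hfU C hCf).2 (Finset.Subset.refl A)
    have hgV' : ∀ A' ∈ g', A'.Nonempty ∧ A' ⊆ V \ B := by
      intro A' hA'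
      obtain ⟨C, hC, rfl⟩ := Finset.mem_image.mp hA'
      have hCg := Finset.mem_of_mem_erase hC
      have hCB := Finset.ne_of_mem_erase hC
      constructor
      · rw [Finset.sdiff_nonempty]
        intro hsub
        exact hCB (Finset.eq_of_subset_of_card_le hsub (hBmin C hCg))
      · exact Finset.sdiff_subset_sdiff (hgV C hCg).2 (Finset.Subset.refl B)
    have hfC' : ∀ A' ∈ f', ∀ B' ∈ f', A' ⊆ B' ∨ B' ⊆ A' := by
      intro A' hA' B' hB'
      obtain ⟨C, hC, rfl⟩ := Finset.mem_image.mp hA'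
      obtain ⟨D, hD, rfl⟩ := Finset.mem_image.mp hB'
      rcases hfC C (Finset.mem_of_mem_erase hC) D (Finset.mem_of_mem_erase hD) with h | h
      · exact Or.inl (Finset.sdiff_subset_sdiff h (Finset.Subset.refl A))
      · exact Or.inr (Finset.sdiff_subset_sdiff h (Finset.Subset.refl A))
    have hgC' : ∀ A' ∈ g', ∀ B' ∈ g', A' ⊆ B' ∨ B' ⊆ A' := by
      intro A' hA' B' hB'
      obtain ⟨C, hC, rfl⟩ := Finset.mem_image.mp hA'
      obtain ⟨D, hD, rfl⟩ := Finset.mem_image.mp hB'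
      rcases hgC C (Finset.mem_of_mem_erase hC) D (Finset.mem_of_mem_erase hD) with h | h
      · exact Or.inl (Finset.sdiff_subset_sdiff h (Finset.Subset.refl B))
      · exact Or.inr (Finset.sdiff_subset_sdiff h (Finset.Subset.refl B))
    obtain ⟨σ', hσ'inj, hσ'im, hσ'f⟩ :=
      ih f' g' (U \ A) (V \ B) hf'card hUV' hfU' hfC' hgV' hgC' hcard'
    obtain ⟨τ, hτinj, hτim⟩ := exists_injOn_image_eq hBA.symm
    set σ : ℕ → ℕ := fun x => if x ∈ A then τ x else σ' x with hσ
    have himg : ∀ s : Finset ℕ, (∀ x ∈ s, x ∉ A) → s.image σ = s.image σ' := by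
      intro s hs
      apply Finset.image_congr
      intro x hx
      simp only [hσ, if_neg (hs x hx)]
    have hAim : A.image σ = B := by
      rw [show A.image σ = A.image τ from Finset.image_congr
        (fun x hx => by simp only [hσ, if_pos (Finset.mem_coe.mp hx)]), hτim]
    have hU'im : (U \ A).image σ = V \ B := by
      rw [himg _ (fun x hx => (Finset.mem_sdiff.mp hx).2), hσ'im]
    refine ⟨σ, ?_, ?_, ?_⟩
    · -- injectivity on U
      intro x hx y hy hxy
      simp only [Finset.mem_coe] at hx hy
      by_cases hxA : x ∈ A <;> by_cases hyA : y ∈ A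
      · exact hτinj (Finset.mem_coe.mpr hxA) (Finset.mem_coe.mpr hyA)
          (by simpa only [hσ, if_pos hxA, if_pos hyA] using hxy)
      · exfalso
        have h1 : σ x ∈ B := hAim ▸ Finset.mem_image_of_mem σ hxA
        have h2 : σ y ∈ V \ B := hU'im ▸ Finset.mem_image_of_mem σ (Finset.mem_sdiff.mpr ⟨hy, hyA⟩)
        rw [hxy] at h1
        exact (Finset.mem_sdiff.mp h2).2 h1
      · exfalso
        have h1 : σ y ∈ B := hAim ▸ Finset.mem_image_of_mem σ hyA
        have h2 : σ x ∈ V \ B := hU'im ▸ Finset.mem_image_of_mem σ (Finset.mem_sdiff.mpr ⟨hx, hxA⟩)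
        rw [← hxy] at h1
        exact (Finset.mem_sdiff.mp h2).2 h1
      · have := hσ'inj (Finset.mem_coe.mpr (Finset.mem_sdiff.mpr ⟨hx, hxA⟩))
          (Finset.mem_coe.mpr (Finset.mem_sdiff.mpr ⟨hy, hyA⟩))
        apply this
        simpa only [hσ, if_neg hxA, if_neg hyA] using hxy
    · -- image of U
      have hU : U = A ∪ (U \ A) := (Finset.union_sdiff_of_subset hAU).symm
      rw [hU, Finset.image_union, hAim, hU'im]
      exact Finset.union_sdiff_of_subset hBV
    · -- flags map
      apply Finset.Subset.antisymm
      · intro D hD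
        obtain ⟨C, hC, rfl⟩ := Finset.mem_image.mp hD
        have hCsplit : C = A ∪ (C \ A) := (Finset.union_sdiff_of_subset (hAsub C hC)).symm
        rw [hCsplit, Finset.image_union, hAim,
          himg _ (fun x hx => (Finset.mem_sdiff.mp hx).2)]
        by_cases hCA : C = A
        · subst hCA
          simpa using hB
        · have hmem : (C \ A).image σ' ∈ g' := by
            rw [← hσ'f]
            exact Finset.mem_image_of_mem _ (Finset.mem_image_of_mem _
              (Finset.mem_erase.mpr ⟨hCA, hC⟩))
          obtain ⟨E, hE, hEeq⟩ := Finset.mem_image.mp hmem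
          rw [← hEeq, Finset.union_sdiff_of_subset (hBsub E (Finset.mem_of_mem_erase hE))]
          exact Finset.mem_of_mem_erase hE
      · intro E hE
        by_cases hEB : E = B
        · subst hEB
          exact Finset.mem_image.mpr ⟨A, hA, hAim⟩
        · have hmem : E \ B ∈ g' := Finset.mem_image_of_mem _ (Finset.mem_erase.mpr ⟨hEB, hE⟩)
          rw [← hσ'f] at hmem
          obtain ⟨X, hX, hXeq⟩ := Finset.mem_image.mp hmem
          obtain ⟨C, hC, rfl⟩ := Finset.mem_image.mp hX
          have hCf := Finset.mem_of_mem_erase hC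
          refine Finset.mem_image.mpr ⟨C, hCf, ?_⟩
          have hCsplit : C = A ∪ (C \ A) := (Finset.union_sdiff_of_subset (hAsub C hCf)).symm
          rw [hCsplit, Finset.image_union, hAim,
            himg _ (fun x hx => (Finset.mem_sdiff.mp hx).2), hXeq,
            Finset.union_sdiff_of_subset (hBsub E hE)]

end Aux2

section Aux3
open scoped Classical

lemma ncard_le_natCard {V : Type*} [Finite V] (s : Set V) : s.ncard ≤ Nat.card V := by
  rw [← Set.ncard_univ]
  exact Set.ncard_le_ncard (Set.subset_univ s) Set.finite_univ

lemma bddAbove_indep {V : Type*} [Finite V] (G : SimpleGraph V) :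
    BddAbove {k | ∃ s : Set V, IsIndep G s ∧ s.ncard = k} := by
  refine ⟨Nat.card V, ?_⟩
  rintro k ⟨s, -, rfl⟩
  exact ncard_le_natCard s

lemma le_indepNum {V : Type*} [Finite V] (G : SimpleGraph V) {s : Set V} (h : IsIndep G s) :
    s.ncard ≤ indepNum G := le_csSup (bddAbove_indep G) ⟨s, h, rfl⟩

lemma exists_indep_ncard {V : Type*} [Finite V] (G : SimpleGraph V) :
    ∃ s : Set V, IsIndep G s ∧ s.ncard = indepNum G :=
  by
  refine Nat.sSup_mem ?_ (bddAbove_indep G)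
  exact ⟨0, ∅, fun u hu => absurd hu (Set.notMem_empty u), Set.ncard_empty _⟩

lemma isFlag_projFlag {n : ℕ} {S T : Finset ℕ} (hST : S ⊆ T) {f : Finset (Finset ℕ)}
    (hf : IsFlag n f) (hT : flagType f = T) :
    IsFlag n (projFlag S f) ∧ flagType (projFlag S f) = S := by
  constructor
  · exact ⟨fun A hA => hf.1 A (Finset.mem_of_mem_filter A hA),
      fun A hA B hB => hf.2 A (Finset.mem_of_mem_filter A hA) B (Finset.mem_of_mem_filter B hB)⟩
  · ext x
    simp only [flagType, projFlag, Finset.mem_image, Finset.mem_filter]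
    constructor
    · rintro ⟨A, ⟨hA, hAS⟩, rfl⟩; exact hAS
    · intro hx
      have : x ∈ flagType f := hT ▸ hST hx
      obtain ⟨A, hA, rfl⟩ := Finset.mem_image.mp this
      exact ⟨A, ⟨hA, hx⟩, rfl⟩

noncomputable def projV (n : ℕ) (S T : Finset ℕ) (hST : S ⊆ T) (h : FlagV n T) : FlagV n S :=
  ⟨projFlag S h.1, (isFlag_projFlag hST h.2.1 h.2.2).1, (isFlag_projFlag hST h.2.1 h.2.2).2⟩

lemma card_image_eq {n : ℕ} {σ : ℕ → ℕ} (hinj : Set.InjOn σ (↑(Iv n) : Set ℕ))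
    {A : Finset ℕ} (hA : A ⊆ Iv n) : (A.image σ).card = A.card :=
  Finset.card_image_of_injOn (hinj.mono (Finset.coe_subset.mpr hA))

lemma flag_image {n : ℕ} {σ : ℕ → ℕ} (hinj : Set.InjOn σ (↑(Iv n) : Set ℕ))
    (him : (Iv n).image σ = Iv n) {f : Finset (Finset ℕ)} (hf : IsFlag n f) :
    IsFlag n (f.image (Finset.image σ)) ∧ flagType (f.image (Finset.image σ)) = flagType f := by
  refine ⟨⟨?_, ?_⟩, ?_⟩
  · intro A' hA'
    obtain ⟨A, hA, rfl⟩ := Finset.mem_image.mp hA'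
    obtain ⟨hne, hsub, hneq⟩ := hf.1 A hA
    refine ⟨hne.image σ, ?_, ?_⟩
    · rw [← him]; exact Finset.image_subset_image hsub
    · intro h
      have h1 : (A.image σ).card = A.card := card_image_eq hinj hsub
      have h2 : A.card < n := by
        have := Finset.card_lt_card (Finset.ssubset_iff_subset_ne.mpr ⟨hsub, hneq⟩)
        rwa [Iv_card] at this
      rw [h, Iv_card] at h1
      omega
  · intro A' hA' B' hB'
    obtain ⟨A, hA, rfl⟩ := Finset.mem_image.mp hA'
    obtain ⟨B, hB, rfl⟩ := Finset.mem_image.mp hB'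
    rcases hf.2 A hA B hB with h | h
    · exact Or.inl (Finset.image_subset_image h)
    · exact Or.inr (Finset.image_subset_image h)
  · rw [flagType, flagType, Finset.image_image]
    apply Finset.image_congr
    intro A hA
    exact card_image_eq hinj (hf.1 A (Finset.mem_coe.mp hA)).2.1

lemma projFlag_image {n : ℕ} {S : Finset ℕ} {σ : ℕ → ℕ} (hinj : Set.InjOn σ (↑(Iv n) : Set ℕ))
    {f : Finset (Finset ℕ)} (hf : IsFlag n f) :
    projFlag S (f.image (Finset.image σ)) = (projFlag S f).image (Finset.image σ) := by
  unfold projFlag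
  rw [Finset.filter_image]
  congr 1
  apply Finset.filter_congr
  intro A hA
  rw [card_image_eq hinj (hf.1 A hA).2.1]

lemma image_image_injOn {n : ℕ} {σ : ℕ → ℕ} (hinj : Set.InjOn σ (↑(Iv n) : Set ℕ))
    {f g : Finset (Finset ℕ)} (hfs : ∀ A ∈ f, A ⊆ Iv n) (hgs : ∀ A ∈ g, A ⊆ Iv n)
    (h : f.image (Finset.image σ) = g.image (Finset.image σ)) : f = g := by
  have key : ∀ A B : Finset ℕ, A ⊆ Iv n → B ⊆ Iv n → A.image σ = B.image σ → A = B := by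
    intro A B hA hB hAB
    apply Finset.Subset.antisymm
    · intro a ha
      have : σ a ∈ B.image σ := hAB ▸ Finset.mem_image_of_mem σ ha
      obtain ⟨b, hb, hba⟩ := Finset.mem_image.mp this
      rwa [← hinj (Finset.mem_coe.mpr (hB hb)) (Finset.mem_coe.mpr (hA ha)) hba]
    · intro b hb
      have : σ b ∈ A.image σ := hAB ▸ Finset.mem_image_of_mem σ hb
      obtain ⟨a, ha, hab⟩ := Finset.mem_image.mp this
      rwa [← hinj (Finset.mem_coe.mpr (hA ha)) (Finset.mem_coe.mpr (hB hb)) hab]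
  ext A
  constructor
  · intro hAf
    have : A.image σ ∈ g.image (Finset.image σ) := h ▸ Finset.mem_image_of_mem _ hAf
    obtain ⟨B, hBg, hBA⟩ := Finset.mem_image.mp this
    rwa [← key B A (hgs B hBg) (hfs A hAf) hBA]
  · intro hAg
    have : A.image σ ∈ f.image (Finset.image σ) := h ▸ Finset.mem_image_of_mem _ hAg
    obtain ⟨B, hBf, hBA⟩ := Finset.mem_image.mp this
    rwa [← key B A (hfs B hBf) (hgs A hAg) hBA]

end Aux3

section Aux4
open scoped Classical

lemma fiber_card_le {n : ℕ} {S T : Finset ℕ} (hST : S ⊆ T) (v w : FlagV n S) :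
    (Finset.univ.filter (fun h : FlagV n T => projV n S T hST h = v)).card ≤
    (Finset.univ.filter (fun h : FlagV n T => projV n S T hST h = w)).card := by
  obtain ⟨σ, hinj, him, hmap⟩ := exists_sigma v.1.card v.1 w.1 (Iv n) (Iv n)
    le_rfl rfl
    (fun A hA => ⟨(v.2.1.1 A hA).1, (v.2.1.1 A hA).2.1⟩) v.2.1.2
    (fun A hA => ⟨(w.2.1.1 A hA).1, (w.2.1.1 A hA).2.1⟩) w.2.1.2
    (v.2.2.trans w.2.2.symm)
  have Φdef : ∀ h : FlagV n T, IsFlag n (h.1.image (Finset.image σ)) ∧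
      flagType (h.1.image (Finset.image σ)) = T := by
    intro h
    obtain ⟨h1, h2⟩ := flag_image hinj him h.2.1
    exact ⟨h1, h2.trans h.2.2⟩
  apply Finset.card_le_card_of_injOn
    (fun h => (⟨h.1.image (Finset.image σ), Φdef h⟩ : FlagV n T))
  · intro h hh
    simp only [Finset.mem_coe, Finset.mem_filter, Finset.mem_univ, true_and] at hh ⊢
    show (⟨h.1.image (Finset.image σ), Φdef h⟩ : FlagV n T) ∈
      ((Finset.univ.filter (fun h : FlagV n T => projV n S T hST h = w) : Finset (FlagV n T)) :
        Set (FlagV n T))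
    refine Finset.mem_coe.mpr (Finset.mem_filter.mpr ⟨Finset.mem_univ (α := FlagV n T) _, ?_⟩)
    apply Subtype.ext
    show projFlag S (h.1.image (Finset.image σ)) = w.1
    rw [projFlag_image hinj h.2.1]
    have : projFlag S h.1 = v.1 := congrArg Subtype.val hh
    rw [this, hmap]
  · intro h1 hh1 h2 hh2 heq
    apply Subtype.ext
    have heq' : h1.1.image (Finset.image σ) = h2.1.image (Finset.image σ) := by
      simpa [Subtype.ext_iff] using heq
    exact image_image_injOn hinj (fun A hA => (h1.2.1.1 A hA).2.1)
      (fun A hA => (h2.2.1.1 A hA).2.1) heq'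

lemma fiber_card_const {n : ℕ} {S T : Finset ℕ} (hST : S ⊆ T) (v w : FlagV n S) :
    (Finset.univ.filter (fun h : FlagV n T => projV n S T hST h = v)).card =
    (Finset.univ.filter (fun h : FlagV n T => projV n S T hST h = w)).card :=
  le_antisymm (fiber_card_le hST v w) (fiber_card_le hST w v)

lemma card_fiber_mul {n : ℕ} {S T : Finset ℕ} (hST : S ⊆ T) (v : FlagV n S) :
    Nat.card (FlagV n T) =
      Nat.card (FlagV n S) *
        (Finset.univ.filter (fun h : FlagV n T => projV n S T hST h = v)).card := by
  rw [Nat.card_eq_fintype_card, Nat.card_eq_fintype_card, ← Finset.card_univ, ← Finset.card_univ]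
  rw [Finset.card_eq_sum_card_fiberwise
    (f := projV n S T hST) (t := Finset.univ) (fun x _ => Finset.mem_univ _)]
  rw [Finset.sum_congr rfl (fun w _ => fiber_card_const hST w v), Finset.sum_const, smul_eq_mul]

lemma flagV_nonempty {n : ℕ} {S : Finset ℕ} (hS : S.Nonempty) (hSsub : S ⊆ Iv (n - 1)) :
    Nonempty (FlagV n S) := by
  have hbd : ∀ s ∈ S, 1 ≤ s ∧ s ≤ n - 1 := by
    intro s hs
    have := hSsub hs
    simpa [Iv, Finset.mem_Icc] using this
  have hn : 2 ≤ n := by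
    obtain ⟨s, hs⟩ := hS
    have := hbd s hs
    omega
  refine ⟨⟨S.image (fun s => Iv s), ⟨?_, ?_⟩, ?_⟩⟩
  · intro A hA
    obtain ⟨s, hs, rfl⟩ := Finset.mem_image.mp hA
    obtain ⟨h1, h2⟩ := hbd s hs
    refine ⟨⟨1, by simp [Iv, Finset.mem_Icc]; omega⟩, ?_, ?_⟩
    · exact Finset.Icc_subset_Icc le_rfl (by omega)
    · intro h
      have := congrArg Finset.card h
      rw [Iv_card, Iv_card] at this
      omega
  · intro A hA B hB
    obtain ⟨s, hs, rfl⟩ := Finset.mem_image.mp hA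
    obtain ⟨t, ht, rfl⟩ := Finset.mem_image.mp hB
    rcases le_total s t with h | h
    · exact Or.inl (Finset.Icc_subset_Icc le_rfl h)
    · exact Or.inr (Finset.Icc_subset_Icc le_rfl h)
  · rw [flagType, Finset.image_image]
    have : S.image (Finset.card ∘ fun s => Iv s) = S.image id := by
      apply Finset.image_congr
      intro s _
      simp [Function.comp_apply, Iv_card]
    rw [this, Finset.image_id]

end Aux4


/-- `α(Γ(n,T)) ≥ α(Γ(n,S)) · |VΓ(n,T)|/|VΓ(n,S)|` for distinct
nonempty `S ⊆ T ⊆ [n-1]`. -/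
theorem indepNum_proj_lower_bound (n : ℕ) (S T : Finset ℕ) (hS : S.Nonempty)
    (hST : S ⊆ T) (hne : S ≠ T) (hTsub : T ⊆ Iv (n - 1)) :
    indepNum (flagGraph n S) * (Nat.card (FlagV n T) / Nat.card (FlagV n S)) ≤
      indepNum (flagGraph n T) := by
  classical
  have hne' : Nonempty (FlagV n S) := flagV_nonempty hS (hST.trans hTsub)
  have hpos : 0 < Nat.card (FlagV n S) := @Nat.card_pos _ hne' _
  obtain ⟨v0⟩ := hne'
  set q := (Finset.univ.filter (fun h : FlagV n T => projV n S T hST h = v0)).card with hqdef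
  have hq : Nat.card (FlagV n T) = Nat.card (FlagV n S) * q := card_fiber_mul hST v0
  have hdiv : Nat.card (FlagV n T) / Nat.card (FlagV n S) = q := by
    rw [hq, Nat.mul_div_cancel_left q hpos]
  rw [hdiv]
  obtain ⟨s, hs, hscard⟩ := exists_indep_ncard (flagGraph n S)
  set P := Finset.univ.filter (fun h : FlagV n T => projV n S T hST h ∈ s) with hPdef
  have hPindep : IsIndep (flagGraph n T) ↑P := by
    intro u hu v hv hadj
    simp only [hPdef, Finset.coe_filter, Set.mem_setOf_eq, Finset.mem_univ, true_and] at hu hv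
    obtain ⟨hne', hgp⟩ : u ≠ v ∧ GenPos n u.1 v.1 := hadj
    by_cases hpe : projV n S T hST u = projV n S T hST v
    · have hvne : (projV n S T hST u).1.Nonempty := by
        have hty : flagType (projV n S T hST u).1 = S := (projV n S T hST u).2.2
        rw [flagType] at hty
        exact Finset.image_nonempty.mp (hty ▸ hS)
      obtain ⟨A, hA⟩ := hvne
      have hAu : A ∈ u.1 := Finset.mem_of_mem_filter A hA
      have hAv : A ∈ v.1 := by
        have hA' : A ∈ (projV n S T hST v).1 := hpe ▸ hA
        exact Finset.mem_of_mem_filter A hA'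
      rcases hgp A hAu A hAv with h | h
      · rw [Finset.inter_self] at h
        exact (u.2.1.1 A hAu).1.ne_empty h
      · rw [Finset.union_self] at h
        exact (u.2.1.1 A hAu).2.2 h
    · refine hs hu hv (show projV n S T hST u ≠ projV n S T hST v ∧
          GenPos n (projV n S T hST u).1 (projV n S T hST v).1 from ⟨hpe, ?_⟩)
      intro A hA B hB
      exact hgp A (Finset.mem_of_mem_filter A hA) B (Finset.mem_of_mem_filter B hB)
  have hPcard : P.card = indepNum (flagGraph n S) * q := by
    have hmem : ∀ x ∈ P, projV n S T hST x ∈ s.toFinset := by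
      intro x hx
      rw [Set.mem_toFinset]
      exact (Finset.mem_filter.mp hx).2
    rw [Finset.card_eq_sum_card_fiberwise hmem]
    have hfib : ∀ w ∈ s.toFinset,
        (P.filter (fun h => projV n S T hST h = w)).card = q := by
      intro w hw
      rw [Set.mem_toFinset] at hw
      have : P.filter (fun h => projV n S T hST h = w)
          = Finset.univ.filter (fun h => projV n S T hST h = w) := by
        ext h
        simp only [hPdef, Finset.mem_filter, Finset.mem_univ, true_and]
        constructor
        · rintro ⟨-, h2⟩; exact h2
        · intro h2; exact ⟨h2 ▸ hw, h2⟩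
      rw [this, hqdef]
      exact fiber_card_const hST w v0
    rw [Finset.sum_congr rfl hfib, Finset.sum_const, smul_eq_mul]
    congr 1
    rw [← hscard, Set.ncard_eq_toFinset_card']
  calc indepNum (flagGraph n S) * q = P.card := hPcard.symm
    _ = (↑P : Set (FlagV n T)).ncard := (Set.ncard_coe_finset P).symm
    _ ≤ indepNum (flagGraph n T) := le_indepNum _ hPindep
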